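/- Let ν be a stochastic dynamical system on a countable type S, let u ∈ S and let F ⊆ S be a set of terminal states. Define the success-by-time curve F_ν(t) = ∑' over trajectories h of length at most t starting at u whose last state lies in F and none of whose earlier states lies in F, of ν(h), and define τ*_ν(F) = inf over integers t ≥ 1 of t / F_ν(t) (taken in [0,∞], with t/0 = ∞). Then the restart baseline improves on every single-path bound: τ*_ν(F) ≤ inf { T(h)/ν(h) : h a trajectory starting at u whose last state lies in F and ν(h) > 0 }. -/

import Mathlib

open scoped ENNReal NNReal
/-- The probability of a trajectory `h = (s₁, …, sₙ)` under the transition kernel `ν`: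
the product of the transition probabilities along adjacent pairs
(so a length-1 trajectory has probability 1). -/
def trajProb {S : Type*} (ν : S → S → NNReal) (h : List S) : NNReal :=
  ((h.zip h.tail).map fun p => ν p.1 p.2).prod

/-- The success-by-time curve `F_ν(t)`: the total probability of trajectories of length at
most `t` starting at `u` whose last state lies in `F` and none of whose earlier states lies
in `F`. -/
noncomputable def successBy {S : Type*} (ν : S → S → NNReal) (u : S) (F : Set S) (t : ℕ) :
    ℝ≥0∞ :=
  ∑' h : {h : List S // h.length ≤ t ∧ h.head? = some u ∧
      (∃ s, h.getLast? = some s ∧ s ∈ F) ∧ ∀ s ∈ h.dropLast, s ∉ F},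
    (trajProb ν h.1 : ℝ≥0∞)

/-- The restart baseline `τ*_ν(F) = inf_{t ≥ 1} t / F_ν(t)`, in `[0,∞]` (with `t/0 = ∞`). -/
noncomputable def restartTime {S : Type*} (ν : S → S → NNReal) (u : S) (F : Set S) : ℝ≥0∞ :=
  ⨅ t ∈ {t : ℕ | 1 ≤ t}, (t : ℝ≥0∞) / successBy ν u F t

/-!
Truncate a trajectory `h` from `u` into `F` at its first visit to `F`. The truncation is one of
the trajectories counted by `F_ν(T(h))`, and, since every transition probability is at most `1`,
its probability is at least `ν(h)`. Hence `F_ν(T(h)) ≥ ν(h)` and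
`τ*_ν(F) ≤ T(h) / F_ν(T(h)) ≤ T(h) / ν(h)`.
-/

lemma NNReal.le_one_of_tsum_eq_one {α : Type*} {f : α → ℝ≥0} (hf : ∑' a, f a = 1) (a : α) :
    f a ≤ 1 := by
  have hsum : Summable f := by
    by_contra hns
    simp [tsum_eq_zero_of_not_summable hns] at hf
  exact hf ▸ hsum.le_tsum a fun _ _ => zero_le

lemma List.exists_isPrefix_first_mem {α : Type*} {l : List α} {F : Set α} (h : ∃ x ∈ l, x ∈ F) :
    ∃ p, p <+: l ∧ p ≠ [] ∧ (∃ s, p.getLast? = some s ∧ s ∈ F) ∧ ∀ x ∈ p.dropLast, x ∉ F := by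
  classical
  set i := l.findIdx (· ∈ F)
  have hi : i < l.length := findIdx_lt_length_of_exists (by simpa using h)
  refine ⟨l.take (i + 1), take_prefix _ _, by simpa using ne_nil_of_length_pos (by omega),
    ⟨l[i], ?_, ?_⟩, ?_⟩
  · simp [getLast?_take, hi]
  · simpa using findIdx_getElem (w := hi)
  · intro x hx
    rw [dropLast_take_eq_take_dropLast, mem_take_iff_getElem] at hx
    obtain ⟨j, hj, rfl⟩ := hx
    simpa using not_of_lt_findIdx (p := (· ∈ F)) (xs := l) (i := j) (by omega)

section
variable {S : Type*} (ν : S → S → ℝ≥0)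

@[simp] lemma trajProb_nil : trajProb ν [] = 1 := rfl

@[simp] lemma trajProb_singleton (a : S) : trajProb ν [a] = 1 := rfl

@[simp] lemma trajProb_cons_cons (a b : S) (l : List S) :
    trajProb ν (a :: b :: l) = ν a b * trajProb ν (b :: l) := by
  simp [trajProb]

variable {ν}

lemma trajProb_le_one (hν : ∀ a b, ν a b ≤ 1) (l : List S) : trajProb ν l ≤ 1 := by
  refine (List.prod_le_pow_card _ 1 ?_).trans_eq (one_pow _)
  simp only [List.mem_map]
  rintro _ ⟨p, -, rfl⟩
  exact hν _ _

lemma trajProb_le_of_isPrefix (hν : ∀ a b, ν a b ≤ 1) :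
    ∀ {p l : List S}, p <+: l → trajProb ν l ≤ trajProb ν p
  | [], l, _ => by simpa using trajProb_le_one hν l
  | [_], l, _ => by simpa using trajProb_le_one hν l
  | a :: b :: p, a' :: b' :: l, hpl => by
    obtain ⟨rfl, hbp⟩ := List.cons_prefix_cons.mp hpl
    obtain ⟨rfl, -⟩ := List.cons_prefix_cons.mp hbp
    simpa using mul_le_mul_right (trajProb_le_of_isPrefix hν hbp) _
  | _ :: _ :: _, [], hpl | _ :: _ :: _, [_], hpl => by simpa using hpl.length_le

lemma trajProb_le_successBy (hν : ∀ a b, ν a b ≤ 1) {u : S} {F : Set S} {h : List S}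
    (hu : h.head? = some u) (hF : ∃ s, h.getLast? = some s ∧ s ∈ F) :
    (trajProb ν h : ℝ≥0∞) ≤ successBy ν u F h.length := by
  obtain ⟨s, hs, hsF⟩ := hF
  obtain ⟨p, hph, hp, hpF, hpF'⟩ :=
    List.exists_isPrefix_first_mem ⟨s, List.mem_of_getLast? hs, hsF⟩
  have hpu : p.head? = some u := by
    rw [← hu, List.head?_eq_some_head hp, hph.head hp, ← List.head?_eq_some_head]
  calc (trajProb ν h : ℝ≥0∞) ≤ trajProb ν p := by exact_mod_cast trajProb_le_of_isPrefix hν hph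
    _ ≤ successBy ν u F h.length := by
      unfold successBy
      exact ENNReal.le_tsum (⟨p, hph.length_le, hpu, hpF, hpF'⟩ : {q : List S // _})

end

theorem restartTime_le_single_path_general {S : Type*}
    (ν : S → S → NNReal) (hν : ∀ s : S, ∑' t : S, ν s t = 1)
    (u : S) (F : Set S) :
    restartTime ν u F ≤
      ⨅ h ∈ {h : List S | h.head? = some u ∧ (∃ s, h.getLast? = some s ∧ s ∈ F) ∧
          0 < trajProb ν h},
        (h.length : ℝ≥0∞) / (trajProb ν h : ℝ≥0∞) := by
  refine le_iInf₂ fun h ⟨hu, hF, _⟩ => ?_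
  have hlen : 1 ≤ h.length := List.length_pos_iff.mpr (by rintro rfl; simp at hu)
  calc restartTime ν u F ≤ h.length / successBy ν u F h.length := iInf₂_le h.length hlen
    _ ≤ h.length / trajProb ν h := ENNReal.div_le_div_left
        (trajProb_le_successBy (fun a => NNReal.le_one_of_tsum_eq_one (hν a)) hu hF) _

/-- **The restart baseline improves on every single-path bound:**
`τ*_ν(F) ≤ inf { T(h)/ν(h) : h a trajectory starting at u ending in F with ν(h) > 0 }`. -/
theorem restartTime_le_single_path {S : Type*} [Countable S]
    (ν : S → S → NNReal) (hν : ∀ s : S, ∑' t : S, ν s t = 1)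
    (u : S) (F : Set S) :
    restartTime ν u F ≤
      ⨅ h ∈ {h : List S | h.head? = some u ∧ (∃ s, h.getLast? = some s ∧ s ∈ F) ∧
          0 < trajProb ν h},
        (h.length : ℝ≥0∞) / (trajProb ν h : ℝ≥0∞) :=
  restartTime_le_single_path_general ν hν u F
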